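/- arXiv:1505.00086 — 4 statements merged into one kernel-verified Lean document; each statement's English description precedes it below -/
import Mathlib

section
/- Suppose w : [t₀,T) → ℝ is absolutely continuous, C > 0, ε ∈ (0, 1/2), w(t₀) < -√(C² + C²/ε), w satisfies -w² - C² ≤ w'(t) ≤ -w² + C² a.e., and w(t) → -∞ as t → T. Then for all t ∈ [t₀,T): (-1-ε)(T-t) ≤ 1/w(t) ≤ (-1+ε)(T-t). -/
/-!
Let `M = √(C² + C²/ε)`. While `w ≤ -M` the inequality gives `w' ≤ C² - w² ≤ 0`, so
`w` can never climb back to `-M`: it stays below `-M` on all of `[t₀, T)`. There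
`C² ≤ ε w²`, hence `(1/w)' = -w'/w²` lies in `[1 - ε, 1 + ε]` almost everywhere.
Integrating from `t` to `b` and letting `b → T`, where `1/w(b) → 0`, gives
`(1 - ε)(T - t) ≤ -1/w(t) ≤ (1 + ε)(T - t)`.
-/

open MeasureTheory Filter Set Topology

theorem sub_mem_Icc_of_hasDerivAt_of_ae_mem_Icc {f f' : ℝ → ℝ} {a b m M : ℝ} (hab : a ≤ b)
    (hf : ContinuousOn f (Icc a b)) (hderiv : ∀ x ∈ Ioo a b, HasDerivAt f (f' x) x)
    (hbound : ∀ᵐ x ∂volume.restrict (Ioo a b), f' x ∈ Icc m M) :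
    f b - f a ∈ Icc (m * (b - a)) (M * (b - a)) := by
  have hmeas : AEStronglyMeasurable f' (volume.restrict (Ioo a b)) :=
    (measurable_deriv f).aestronglyMeasurable.congr <|
      (ae_restrict_iff' measurableSet_Ioo).2 (ae_of_all _ fun x hx => (hderiv x hx).deriv)
  have hint : IntervalIntegrable f' volume a b := by
    rw [intervalIntegrable_iff_integrableOn_Ioo_of_le hab]
    refine Integrable.of_bound hmeas (max |m| |M|) ?_
    filter_upwards [hbound] with x hx
    exact abs_le_max_abs_abs hx.1 hx.2
  have hbound' : ∀ᵐ x ∂volume.restrict (Icc a b), f' x ∈ Icc m M := by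
    rwa [← Measure.restrict_congr_set Ioo_ae_eq_Icc]
  rw [← intervalIntegral.integral_eq_sub_of_hasDerivAt_of_le hab hf hderiv hint]
  constructor
  · simpa [mul_comm] using intervalIntegral.integral_mono_ae_restrict hab
      intervalIntegrable_const hint (hbound'.mono fun x hx => hx.1)
  · simpa [mul_comm] using intervalIntegral.integral_mono_ae_restrict hab
      hint intervalIntegrable_const (hbound'.mono fun x hx => hx.2)

theorem sub_mem_Icc_mul_of_tendsto_nhdsLT {g : ℝ → ℝ} {t T m M L : ℝ} (htT : t < T)
    (hg : ∀ b ∈ Ioo t T, g b - g t ∈ Icc (m * (b - t)) (M * (b - t)))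
    (hlim : Tendsto g (𝓝[<] T) (𝓝 L)) :
    L - g t ∈ Icc (m * (T - t)) (M * (T - t)) := by
  have hlin (k : ℝ) : Tendsto (fun b => k * (b - t)) (𝓝[<] T) (𝓝 (k * (T - t))) :=
    ((continuous_const.mul (continuous_id.sub continuous_const)).tendsto T).mono_left
      nhdsWithin_le_nhds
  have hev : ∀ᶠ b in 𝓝[<] T, g b - g t ∈ Icc (m * (b - t)) (M * (b - t)) :=
    mem_of_superset (Ioo_mem_nhdsLT htT) hg
  exact ⟨le_of_tendsto_of_tendsto (hlin m) (hlim.sub_const _) (hev.mono fun b hb => hb.1),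
    le_of_tendsto_of_tendsto (hlim.sub_const _) (hlin M) (hev.mono fun b hb => hb.2)⟩

theorem lt_neg_on_Ico_of_riccati {w w' : ℝ → ℝ} {t₀ T C M : ℝ} (hM : 0 ≤ M)
    (hCM : C ^ 2 ≤ M ^ 2) (hcont : ContinuousOn w (Ico t₀ T))
    (hderiv : ∀ x ∈ Ioo t₀ T, HasDerivAt w (w' x) x)
    (hub : ∀ᵐ t ∂volume, t ∈ Ioo t₀ T → |w' t + w t ^ 2| ≤ C ^ 2) (h0 : w t₀ < -M) :
    ∀ t ∈ Ico t₀ T, w t < -M := by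
  by_contra! ⟨s, hs, hws⟩
  set K := Icc t₀ s ∩ w ⁻¹' Ici (-M)
  have hKbdd : BddBelow K := ⟨t₀, fun x hx => hx.1.1⟩
  have hKclosed : IsClosed K :=
    (hcont.mono (Icc_subset_Ico_right hs.2)).preimage_isClosed_of_isClosed isClosed_Icc isClosed_Ici
  set c := sInf K
  have hcK : c ∈ K := hKclosed.csInf_mem ⟨s, ⟨hs.1, le_rfl⟩, hws⟩ hKbdd
  have hcT : c < T := hcK.1.2.trans_lt hs.2
  have ht₀c : t₀ < c := hcK.1.1.lt_of_ne fun h => (h ▸ h0).not_ge hcK.2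
  have hbelow : ∀ x ∈ Ioo t₀ c, w x < -M := fun x hx =>
    not_le.1 fun hx' => hx.2.not_ge (csInf_le hKbdd ⟨⟨hx.1.le, hx.2.le.trans hcK.1.2⟩, hx'⟩)
  obtain ⟨B, hB⟩ := isCompact_Icc.exists_bound_of_continuousOn
    (hcont.mono (Icc_subset_Ico_right hcT))
  have hbound : ∀ᵐ x ∂volume.restrict (Ioo t₀ c), w' x ∈ Icc (-(B ^ 2 + C ^ 2)) 0 := by
    rw [ae_restrict_iff' measurableSet_Ioo]
    filter_upwards [hub] with x hx hxc
    have hw' := abs_le.1 (hx ⟨hxc.1, hxc.2.trans hcT⟩)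
    have hwB : w x ^ 2 ≤ B ^ 2 :=
      sq_le_sq.2 ((hB x (Ioo_subset_Icc_self hxc)).trans (le_abs_self B))
    have hMw : M ^ 2 ≤ w x ^ 2 := by nlinarith [hbelow x hxc]
    constructor <;> linarith
  have hdecr := (sub_mem_Icc_of_hasDerivAt_of_ae_mem_Icc ht₀c.le
    (hcont.mono (Icc_subset_Ico_right hcT)) (fun x hx => hderiv x ⟨hx.1, hx.2.trans hcT⟩)
    hbound).2
  have hwc : -M ≤ w c := hcK.2
  linarith

theorem neg_div_sq_mem_Icc_of_riccati {w w' C ε : ℝ} (hε : 0 < ε)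
    (hw : C ^ 2 + C ^ 2 / ε < w ^ 2) (h : |w' + w ^ 2| ≤ C ^ 2) :
    -w' / w ^ 2 ∈ Icc (1 - ε) (1 + ε) := by
  have hw2 : 0 < w ^ 2 := lt_of_le_of_lt (by positivity) hw
  have hCw : C ^ 2 ≤ ε * w ^ 2 := by
    have : ε * (C ^ 2 / ε) = C ^ 2 := mul_div_cancel₀ _ hε.ne'
    nlinarith [sq_nonneg C]
  have := abs_le.1 h
  constructor
  · rw [le_div_iff₀ hw2]; linarith
  · rw [div_le_iff₀ hw2]; linarith

theorem stmt4_general (t₀ T C ε : ℝ) (hε : ε ∈ Set.Ioo (0:ℝ) (1/2))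
    (w w' : ℝ → ℝ)
    (hw : ∀ t ∈ Set.Ico t₀ T, HasDerivWithinAt w (w' t) (Set.Ico t₀ T) t)
    (h0 : w t₀ < -Real.sqrt (C ^ 2 + C ^ 2 / ε))
    (hub : ∀ᵐ t ∂volume, t ∈ Set.Ioo t₀ T → |w' t + (w t) ^ 2| ≤ C ^ 2)
    (hblow : Tendsto w (nhdsWithin T (Set.Iio T)) atBot) :
    ∀ t ∈ Set.Ico t₀ T,
      (-1 - ε) * (T - t) ≤ 1 / w t ∧ 1 / w t ≤ (-1 + ε) * (T - t) := by
  obtain ⟨hε0, -⟩ := hε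
  set M := Real.sqrt (C ^ 2 + C ^ 2 / ε)
  have hM0 : 0 ≤ M := Real.sqrt_nonneg _
  have hM2 : M ^ 2 = C ^ 2 + C ^ 2 / ε := Real.sq_sqrt (by positivity)
  have hcont : ContinuousOn w (Ico t₀ T) := fun x hx => (hw x hx).continuousWithinAt
  have hderiv (x) (hx : x ∈ Ioo t₀ T) : HasDerivAt w (w' x) x :=
    (hw x (Ioo_subset_Ico_self hx)).hasDerivAt
      (mem_of_superset (Ioo_mem_nhds hx.1 hx.2) Ioo_subset_Ico_self)
  have hCM : C ^ 2 ≤ M ^ 2 := by rw [hM2]; exact le_add_of_nonneg_right (by positivity)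
  have hbelow := lt_neg_on_Ico_of_riccati hM0 hCM hcont hderiv hub h0
  intro t ht
  have hinv (b) (hb : b ∈ Ioo t T) :
      (w b)⁻¹ - (w t)⁻¹ ∈ Icc ((1 - ε) * (b - t)) ((1 + ε) * (b - t)) := by
    have hsub : Icc t b ⊆ Ico t₀ T := Icc_subset_Ico ht.1 hb.2
    have hne (x) (hx : x ∈ Icc t b) : w x ≠ 0 := ((hbelow x (hsub hx)).trans_le (by simpa)).ne
    refine sub_mem_Icc_of_hasDerivAt_of_ae_mem_Icc hb.1.le ((hcont.mono hsub).inv₀ hne)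
      (fun x hx => (hderiv x ⟨ht.1.trans_lt hx.1, hx.2.trans hb.2⟩).inv
        (hne x (Ioo_subset_Icc_self hx))) ?_
    rw [ae_restrict_iff' measurableSet_Ioo]
    filter_upwards [hub] with x hx hxb
    have hxI : x ∈ Ioo t₀ T := ⟨ht.1.trans_lt hxb.1, hxb.2.trans hb.2⟩
    refine neg_div_sq_mem_Icc_of_riccati hε0 ?_ (hx hxI)
    nlinarith [hbelow x (Ioo_subset_Ico_self hxI)]
  have hbounds := sub_mem_Icc_mul_of_tendsto_nhdsLT ht.2 hinv
    (tendsto_inv_atBot_zero.comp hblow)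
  rw [one_div]
  constructor <;> linarith [hbounds.1, hbounds.2]

theorem stmt4 (t₀ T C ε : ℝ) (ht : t₀ < T) (hC : 0 < C) (hε : ε ∈ Set.Ioo (0:ℝ) (1/2))
    (w w' : ℝ → ℝ)
    (hw : ∀ t ∈ Set.Ico t₀ T, HasDerivWithinAt w (w' t) (Set.Ico t₀ T) t)
    (h0 : w t₀ < -Real.sqrt (C ^ 2 + C ^ 2 / ε))
    (hub : ∀ᵐ t ∂volume, t ∈ Set.Ioo t₀ T → |w' t + (w t) ^ 2| ≤ C ^ 2)
    (hblow : Tendsto w (nhdsWithin T (Set.Iio T)) atBot) :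
    ∀ t ∈ Set.Ico t₀ T,
      (-1 - ε) * (T - t) ≤ 1 / w t ∧ 1 / w t ≤ (-1 + ε) * (T - t) :=
  stmt4_general t₀ T C ε hε w w' hw h0 hub hblow
end

section
/- Suppose w : [t₀,T) → ℝ is absolutely continuous, C > 0, |w'(t) + w(t)²| ≤ C² a.e., and w(t) → -∞ as t → T. Then lim_{t→T} w(t)(T - t) = -1. -/
/-!
The substitution `y = 1 / w` linearizes the Riccati-type inequality:
`y' = -w' / w² = 1 - (w' + w²) / w²`, so `|y' - 1| ≤ C² / w²` almost everywhere, and this is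
small near `T` because `w → -∞`. Since also `y → 0`, integrating `y'` over `[t, T)` gives
`y t = -(T - t) (1 + o(1))`, i.e. `w t (T - t) → -1`. The derivative bound holds only almost
everywhere, so the comparison goes through the fundamental theorem of calculus rather than the
mean value theorem.
-/

open MeasureTheory Filter Set Topology intervalIntegral

theorem abs_sub_le_of_ae_abs_deriv_le {f f' : ℝ → ℝ} {a b δ : ℝ} (hab : a ≤ b)
    (hf : ContinuousOn f (Icc a b)) (hderiv : ∀ x ∈ Ioo a b, HasDerivAt f (f' x) x)
    (hbound : ∀ᵐ x, x ∈ Ioo a b → |f' x| ≤ δ) : |f b - f a| ≤ δ * (b - a) := by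
  have hbound' : ∀ᵐ x ∂volume.restrict (Ioo a b), ‖f' x‖ ≤ δ :=
    (ae_restrict_iff' measurableSet_Ioo).2 hbound
  have hmeas : AEStronglyMeasurable f' (volume.restrict (Ioo a b)) :=
    (measurable_deriv f).aestronglyMeasurable.congr <|
      ae_restrict_of_forall_mem measurableSet_Ioo fun x hx => (hderiv x hx).deriv
  have hint : IntervalIntegrable f' volume a b :=
    (intervalIntegrable_iff_integrableOn_Ioo_of_le hab).2
      ⟨hmeas, .restrict_of_bounded δ measure_Ioo_lt_top hbound'⟩
  have hftc : ∫ x in a..b, f' x = f b - f a :=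
    integral_eq_sub_of_hasDeriv_right_of_le hab hf
      (fun x hx => (hderiv x hx).hasDerivWithinAt) hint
  rw [← hftc, ← Real.norm_eq_abs, ← abs_of_nonneg (sub_nonneg.2 hab)]
  refine norm_integral_le_of_norm_le_const_ae ?_
  filter_upwards [hbound, (Ioo_ae_eq_Ioc (μ := volume) (a := a) (b := b)).mem_iff] with x hx hmem
  rwa [uIoc_of_le hab, ← hmem]

theorem abs_sub_le_of_tendsto_of_ae_abs_deriv_le {f f' : ℝ → ℝ} {a b δ L t : ℝ}
    (hderiv : ∀ x ∈ Ioo a b, HasDerivAt f (f' x) x) (hbound : ∀ᵐ x, x ∈ Ioo a b → |f' x| ≤ δ)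
    (hlim : Tendsto f (𝓝[<] b) (𝓝 L)) (ht : t ∈ Ioo a b) : |L - f t| ≤ δ * (b - t) := by
  have hinc : ∀ s ∈ Ioo t b, |f s - f t| ≤ δ * (s - t) := fun s hs =>
    have hsub : Icc t s ⊆ Ioo a b := Icc_subset_Ioo ht.1 hs.2
    abs_sub_le_of_ae_abs_deriv_le hs.1.le
      (fun x hx => (hderiv x (hsub hx)).continuousAt.continuousWithinAt)
      (fun x hx => hderiv x (hsub (Ioo_subset_Icc_self hx)))
      (hbound.mono fun x h hx => h (hsub (Ioo_subset_Icc_self hx)))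
  have hrhs : Tendsto (fun s => δ * (s - t)) (𝓝[<] b) (𝓝 (δ * (b - t))) :=
    ((continuous_const.mul (continuous_id.sub continuous_const)).tendsto b).mono_left
      nhdsWithin_le_nhds
  exact le_of_tendsto_of_tendsto (hlim.sub_const _).abs hrhs
    (eventually_of_mem (Ioo_mem_nhdsLT ht.2) hinc)

theorem tendsto_div_sub_of_ae_deriv {f f' : ℝ → ℝ} {b c : ℝ}
    (hderiv : ∀ᶠ x in 𝓝[<] b, HasDerivAt f (f' x) x)
    (hf' : ∀ δ > 0, ∃ a < b, ∀ᵐ x, x ∈ Ioo a b → |f' x - c| ≤ δ)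
    (hlim : Tendsto f (𝓝[<] b) (𝓝 0)) :
    Tendsto (fun t => f t / (b - t)) (𝓝[<] b) (𝓝 (-c)) := by
  obtain ⟨a₀, ha₀, hderiv⟩ := mem_nhdsLT_iff_exists_Ioo_subset.1 hderiv
  rw [Metric.tendsto_nhds]
  intro ε hε
  obtain ⟨a₁, ha₁, hbound⟩ := hf' (ε / 2) (half_pos hε)
  filter_upwards [Ioo_mem_nhdsLT (max_lt ha₀ ha₁)] with t ht
  have hsub : Ioo (max a₀ a₁) b ⊆ Ioo a₀ b := Ioo_subset_Ioo_left (le_max_left _ _)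
  have key := abs_sub_le_of_tendsto_of_ae_abs_deriv_le (f := fun x => f x - c * x)
    (fun x hx => (hderiv (hsub hx)).sub ((hasDerivAt_id x).const_mul c))
    (hbound.mono fun x h hx => by simpa using h ⟨(le_max_right _ _).trans_lt hx.1, hx.2⟩)
    (hlim.sub (((continuous_const_mul c).tendsto b).mono_left nhdsWithin_le_nhds)) ht
  have hpos : 0 < b - t := sub_pos.2 ht.2
  calc dist (f t / (b - t)) (-c) = |0 - c * b - (f t - c * t)| / (b - t) := by
        rw [Real.dist_eq, show f t / (b - t) - -c = -(0 - c * b - (f t - c * t)) / (b - t) by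
          field_simp; ring, abs_div, abs_neg, abs_of_pos hpos]
    _ ≤ ε / 2 := (div_le_iff₀ hpos).2 key
    _ < ε := half_lt_self hε

theorem abs_neg_div_sq_sub_one_le {x x' K : ℝ} (hx : x ≠ 0) (h : |x' + x ^ 2| ≤ K) :
    |-x' / x ^ 2 - 1| ≤ K / x ^ 2 := by
  have hx2 : 0 < x ^ 2 := by positivity
  rw [show -x' / x ^ 2 - 1 = -((x' + x ^ 2) / x ^ 2) by field_simp; ring, abs_neg, abs_div,
    abs_of_pos hx2]
  gcongr

theorem stmt5_general (t₀ T C : ℝ) (ht : t₀ < T) (w w' : ℝ → ℝ)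
    (hw : ∀ t ∈ Set.Ico t₀ T, HasDerivWithinAt w (w' t) (Set.Ico t₀ T) t)
    (hub : ∀ᵐ t ∂volume, t ∈ Set.Ioo t₀ T → |w' t + (w t) ^ 2| ≤ C ^ 2)
    (hblow : Tendsto w (nhdsWithin T (Set.Iio T)) atBot) :
    Tendsto (fun t => w t * (T - t)) (nhdsWithin T (Set.Iio T)) (nhds (-1)) := by
  have hdom : ∀ᶠ t in 𝓝[<] T, t ∈ Ioo t₀ T ∧ w t < 0 :=
    (eventually_mem_set.2 (Ioo_mem_nhdsLT ht)).and (hblow.eventually_lt_atBot 0)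
  have hderiv : ∀ᶠ t in 𝓝[<] T, HasDerivAt (fun t => (w t)⁻¹) (-w' t / w t ^ 2) t :=
    hdom.mono fun t ⟨htI, hneg⟩ =>
      ((hw t (Ioo_subset_Ico_self htI)).hasDerivAt (Ico_mem_nhds htI.1 htI.2)).inv hneg.ne
  have hrate : ∀ δ > 0, ∃ a < T, ∀ᵐ t, t ∈ Ioo a T → |-w' t / w t ^ 2 - 1| ≤ δ := by
    intro δ hδ
    have hlarge : ∀ᶠ t in 𝓝[<] T, C ^ 2 / δ ≤ w t ^ 2 := by
      simpa using ((tendsto_pow_atTop two_ne_zero).comp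
        (tendsto_neg_atBot_atTop.comp hblow)).eventually_ge_atTop (C ^ 2 / δ)
    obtain ⟨a, ha, hsub⟩ := mem_nhdsLT_iff_exists_Ioo_subset.1 (hdom.and hlarge)
    refine ⟨a, ha, hub.mono fun t hriccati hta => ?_⟩
    obtain ⟨⟨htI, hneg⟩, hC⟩ := hsub hta
    refine (abs_neg_div_sq_sub_one_le hneg.ne (hriccati htI)).trans ?_
    rw [div_le_iff₀ (sq_pos_of_neg hneg)]
    rw [div_le_iff₀ hδ] at hC
    linarith
  have hinv := tendsto_div_sub_of_ae_deriv hderiv hrate (tendsto_inv_atBot_zero.comp hblow)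
  simpa [div_eq_mul_inv, mul_comm] using hinv.inv₀ (by norm_num)

theorem stmt5 (t₀ T C : ℝ) (ht : t₀ < T) (hC : 0 < C) (w w' : ℝ → ℝ)
    (hw : ∀ t ∈ Set.Ico t₀ T, HasDerivWithinAt w (w' t) (Set.Ico t₀ T) t)
    (hub : ∀ᵐ t ∂volume, t ∈ Set.Ioo t₀ T → |w' t + (w t) ^ 2| ≤ C ^ 2)
    (hblow : Tendsto w (nhdsWithin T (Set.Iio T)) atBot) :
    Tendsto (fun t => w t * (T - t)) (nhdsWithin T (Set.Iio T)) (nhds (-1)) :=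
  stmt5_general t₀ T C ht w w' hw hub hblow
end

section
/- Let M > 0, C ≥ 1 and T > 0 with 2C²T·M₀ < 1 where M₀ > 0. Suppose a sequence of continuous functions yₙ : [0,T] → ℝ≥0 satisfies yₙ₊₁(t) ≤ e^{C∫₀ᵗ yₙ(s)ds}(C·M₀ + C∫₀ᵗ e^{-C∫₀^{t'} yₙ(s)ds} yₙ(t')² dt') and y₀(t) ≤ C·M₀/(1 - 2C²M₀t). Then for all n and all t ∈ [0,T], yₙ(t) ≤ C·M₀/(1 - 2C²M₀t). -/
/-!
`G t = C M₀ / (1 - 2 C² M₀ t)` solves the Riccati equation `G' = 2 C G²` with `G 0 = C M₀`.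
If `0 ≤ y ≤ G`, then with `E = exp (-C ∫₀ᵗ y)` the function `E G - C ∫₀ᵗ E y²` has derivative
`C E (G - y) (2 G + y) ≥ 0`, so it dominates its initial value `C M₀`; multiplied by `exp (C ∫₀ᵗ y)`
this says the recursive bound for `yₙ₊₁` is at most `G`, and induction on `n` finishes.
-/

open Set Real

theorem hasDerivAt_const_div_one_sub_mul (b a t : ℝ) (h : 1 - a * t ≠ 0) :
    HasDerivAt (fun u => b / (1 - a * u)) (a * b / (1 - a * t) ^ 2) t :=
  ((hasDerivAt_const t b).div (((hasDerivAt_id t).const_mul a).const_sub 1) h).congr_deriv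
    (by simp only [id]; ring)

theorem one_sub_mul_pos_of_mem_Icc {a u T : ℝ} (haT : a * T < 1) (hu : u ∈ Icc 0 T) :
    0 < 1 - a * u := by
  rcases le_total 0 a with ha | ha
  · nlinarith [mul_le_mul_of_nonneg_left hu.2 ha]
  · nlinarith [mul_nonpos_of_nonpos_of_nonneg ha hu.1]

theorem hasDerivAt_exp_neg_mul_integral {y : ℝ → ℝ} (hy : Continuous y) (c u : ℝ) :
    HasDerivAt (fun u => exp (-(c * ∫ s in (0:ℝ)..u, y s)))
      (exp (-(c * ∫ s in (0:ℝ)..u, y s)) * -(c * y u)) u :=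
  ((hy.integral_hasStrictDerivAt 0 u).hasDerivAt.const_mul c).neg.exp

theorem exp_integral_mul_le_of_riccati {y g : ℝ → ℝ} {c t : ℝ} (hc : 0 ≤ c) (ht : 0 ≤ t)
    (hy : Continuous y) (hy₀ : ∀ s ∈ Icc 0 t, 0 ≤ y s) (hyg : ∀ s ∈ Icc 0 t, y s ≤ g s)
    (hg : ∀ s ∈ Icc 0 t, HasDerivAt g (2 * c * g s ^ 2) s) :
    exp (c * ∫ s in (0:ℝ)..t, y s) *
      (g 0 + c * ∫ s in (0:ℝ)..t, exp (-(c * ∫ τ in (0:ℝ)..s, y τ)) * y s ^ 2) ≤ g t := by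
  set E : ℝ → ℝ := fun u => exp (-(c * ∫ s in (0:ℝ)..u, y s)) with hE_def
  have hE : ∀ u, HasDerivAt E (E u * -(c * y u)) u := hasDerivAt_exp_neg_mul_integral hy c
  have hE_cont : Continuous E := continuous_iff_continuousAt.2 fun u => (hE u).continuousAt
  set φ : ℝ → ℝ := fun u => E u * g u - c * ∫ s in (0:ℝ)..u, E s * y s ^ 2
  have hφ : ∀ u ∈ Icc 0 t,
      HasDerivAt φ (E u * (c * ((g u - y u) * (2 * g u + y u)))) u := by
    intro u hu
    exact (((hE u).mul (hg u hu)).sub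
      (((hE_cont.mul (hy.pow 2)).integral_hasStrictDerivAt 0 u).hasDerivAt.const_mul c)).congr_deriv
      (by simp only [Pi.mul_apply, Pi.pow_apply]; ring)
  have hφ_mono : MonotoneOn φ (Icc 0 t) := by
    refine monotoneOn_of_hasDerivWithinAt_nonneg (convex_Icc 0 t)
      (fun u hu => (hφ u hu).continuousAt.continuousWithinAt)
      (fun u hu => (hφ u (interior_subset hu)).hasDerivWithinAt) fun u hu => ?_
    have hyu := hyg u (interior_subset hu)
    have hy₀u := hy₀ u (interior_subset hu)
    exact mul_nonneg (exp_pos _).le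
      (mul_nonneg hc (mul_nonneg (sub_nonneg.2 hyu) (by linarith)))
  have hφ_zero : φ 0 = g 0 := by simp [φ, E]
  have key := hφ_mono ⟨le_rfl, ht⟩ ⟨ht, le_rfl⟩ ht
  rw [hφ_zero] at key
  calc exp (c * ∫ s in (0:ℝ)..t, y s) * (g 0 + c * ∫ s in (0:ℝ)..t, E s * y s ^ 2)
      ≤ exp (c * ∫ s in (0:ℝ)..t, y s) * (E t * g t) := by gcongr; linarith
    _ = g t := by rw [hE_def, ← mul_assoc, ← exp_add]; simp

theorem stmt15_general (T M₀ C : ℝ) (hC : 1 ≤ C)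
    (hTM : 2 * C ^ 2 * T * M₀ < 1) (y : ℕ → ℝ → ℝ)
    (hcont : ∀ n, Continuous (y n)) (hpos : ∀ n t, 0 ≤ y n t)
    (hbase : ∀ t ∈ Set.Icc (0:ℝ) T, y 0 t ≤ C * M₀ / (1 - 2 * C ^ 2 * M₀ * t))
    (hrec : ∀ n, ∀ t ∈ Set.Icc (0:ℝ) T,
      y (n + 1) t ≤ Real.exp (C * ∫ s in (0:ℝ)..t, y n s) *
        (C * M₀ + C * ∫ s in (0:ℝ)..t,
          Real.exp (-(C * ∫ τ in (0:ℝ)..s, y n τ)) * (y n s) ^ 2)) :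
    ∀ n, ∀ t ∈ Set.Icc (0:ℝ) T, y n t ≤ C * M₀ / (1 - 2 * C ^ 2 * M₀ * t) := by
  set G : ℝ → ℝ := fun t => C * M₀ / (1 - 2 * C ^ 2 * M₀ * t)
  have hG : ∀ t ∈ Icc 0 T, HasDerivAt G (2 * C * G t ^ 2) t := fun t ht => by
    have hden := one_sub_mul_pos_of_mem_Icc (a := 2 * C ^ 2 * M₀) (by linarith) ht
    convert hasDerivAt_const_div_one_sub_mul (C * M₀) _ t hden.ne' using 1
    simp only [G]
    field_simp
  intro n
  induction n with
  | zero => exact hbase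
  | succ n ih =>
    intro t ht
    have hsub : Icc 0 t ⊆ Icc 0 T := Icc_subset_Icc_right ht.2
    have hG_zero : G 0 = C * M₀ := by simp [G]
    calc y (n + 1) t ≤ _ := hrec n t ht
      _ ≤ G t := hG_zero ▸ exp_integral_mul_le_of_riccati (by linarith) ht.1 (hcont n)
          (fun s _ => hpos n s) (fun s hs => ih s (hsub hs)) (fun s hs => hG s (hsub hs))

theorem stmt15 (T M₀ C : ℝ) (hT : 0 < T) (hM₀ : 0 < M₀) (hC : 1 ≤ C)
    (hTM : 2 * C ^ 2 * T * M₀ < 1) (y : ℕ → ℝ → ℝ)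
    (hcont : ∀ n, Continuous (y n)) (hpos : ∀ n t, 0 ≤ y n t)
    (hbase : ∀ t ∈ Set.Icc (0:ℝ) T, y 0 t ≤ C * M₀ / (1 - 2 * C ^ 2 * M₀ * t))
    (hrec : ∀ n, ∀ t ∈ Set.Icc (0:ℝ) T,
      y (n + 1) t ≤ Real.exp (C * ∫ s in (0:ℝ)..t, y n s) *
        (C * M₀ + C * ∫ s in (0:ℝ)..t,
          Real.exp (-(C * ∫ τ in (0:ℝ)..s, y n τ)) * (y n s) ^ 2)) :
    ∀ n, ∀ t ∈ Set.Icc (0:ℝ) T, y n t ≤ C * M₀ / (1 - 2 * C ^ 2 * M₀ * t) :=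
  stmt15_general T M₀ C hC hTM y hcont hpos hbase hrec
end

section
/- Let T > 0 and u ∈ C¹([0,T]; H²(ℝ)). Then for every t ∈ [0,T) there exists ξ(t) ∈ ℝ with m(t) := inf_{x∈ℝ} u_x(t,x) = u_x(t, ξ(t)); moreover m is absolutely continuous on (0,T) and m'(t) = u_{tx}(t, ξ(t)) for a.e. t ∈ (0,T). -/
/-!
Fix `t`. The square of `u_x(t, ·)` has the integrable derivative `2 u_x u_xx`, so `u_x(t, ·)`
vanishes at `±∞`; so does `u(t, ·)`, which forces `u_x(t, ·)` to take a nonpositive value, and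
a continuous function vanishing at infinity with a nonpositive value attains its infimum.

In time, `m` is an infimum of the functions `t ↦ u_x(t, x)`, all `B`-Lipschitz since
`|u_tx| ≤ B`, with each infimum attained; hence `m` is `B`-Lipschitz and, by Rademacher,
differentiable a.e. Where it is, `s ↦ u_x(s, ξ(t)) - m(s)` is nonnegative and vanishes at `t`,
so its derivative `u_tx(t, ξ(t)) - m'(t)` vanishes.
-/

open MeasureTheory Filter Set Topology

theorem tendsto_cocompact_zero_of_memLp_two {f : ℝ → ℝ} (hf : Differentiable ℝ f)
    (hf₂ : MemLp f 2 volume) (hf'₂ : MemLp (deriv f) 2 volume) :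
    Tendsto f (cocompact ℝ) (𝓝 0) := by
  have hsq_deriv : ∀ x, HasDerivAt (fun y => f y ^ 2) ((2 * f * deriv f) x) x := fun x => by
    simpa [mul_assoc] using (hf x).hasDerivAt.fun_pow 2
  have hsq_int : Integrable (fun x => f x ^ 2) := hf₂.integrable_sq
  have hsq'_int : Integrable (2 * f * deriv f) := by
    rw [mul_assoc]; exact (hf₂.integrable_mul hf'₂).const_mul 2
  have hsq : Tendsto (fun x => f x ^ 2) (cocompact ℝ) (𝓝 0) := by
    rw [cocompact_eq_atBot_atTop]
    exact (tendsto_zero_of_hasDerivAt_of_integrableOn_Iic (a := 0) (fun x _ => hsq_deriv x)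
      hsq'_int.integrableOn hsq_int.integrableOn).sup
      (tendsto_zero_of_hasDerivAt_of_integrableOn_Ioi (a := 0) (fun x _ => hsq_deriv x)
      hsq'_int.integrableOn hsq_int.integrableOn)
  rw [tendsto_zero_iff_norm_tendsto_zero]
  simpa [Real.sqrt_sq_eq_abs] using hsq.sqrt

theorem exists_deriv_nonpos_of_tendsto_cocompact {v : ℝ → ℝ} {l : ℝ}
    (hlim : Tendsto v (cocompact ℝ) (𝓝 l)) : ∃ c, deriv v c ≤ 0 := by
  by_contra! hpos
  have hmono : StrictMono v := strictMono_of_deriv_pos hpos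
  rw [cocompact_eq_atBot_atTop, tendsto_sup] at hlim
  have := hmono zero_lt_one
  linarith [hmono.monotone.le_of_tendsto hlim.1 0, hmono.monotone.ge_of_tendsto hlim.2 1]

theorem Continuous.exists_forall_le_of_tendsto_cocompact {X : Type*} [TopologicalSpace X]
    {f : X → ℝ} (hf : Continuous f) (hlim : Tendsto f (cocompact X) (𝓝 0)) {c : X}
    (hc : f c ≤ 0) : ∃ ξ, ∀ x, f ξ ≤ f x := by
  by_cases hneg : ∃ x₀, f x₀ < 0
  · obtain ⟨x₀, hx₀⟩ := hneg
    exact hf.exists_forall_le' x₀ ((hlim.eventually (lt_mem_nhds hx₀)).mono fun _ => le_of_lt)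
  · push Not at hneg
    exact ⟨c, fun x => hc.trans (hneg x)⟩

theorem exists_forall_deriv_le_of_memLp_two {f : ℝ → ℝ} (hf : ContDiff ℝ 2 f)
    (hf₂ : MemLp f 2 volume) (hf'₂ : MemLp (deriv f) 2 volume)
    (hf''₂ : MemLp (deriv (deriv f)) 2 volume) : ∃ ξ, ∀ x, deriv f ξ ≤ deriv f x := by
  have hf' : ContDiff ℝ 1 (deriv f) := hf.deriv'
  obtain ⟨c, hc⟩ := exists_deriv_nonpos_of_tendsto_cocompact
    (tendsto_cocompact_zero_of_memLp_two (hf.differentiable two_ne_zero) hf₂ hf'₂)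
  exact hf'.continuous.exists_forall_le_of_tendsto_cocompact
    (tendsto_cocompact_zero_of_memLp_two (hf'.differentiable one_ne_zero) hf'₂ hf''₂) hc

theorem ciInf_eq_of_forall_le {α ι : Type*} [ConditionallyCompleteLattice α] {f : ι → α}
    {i : ι} (h : ∀ j, f i ≤ f j) :
    ⨅ j, f j = f i :=
  have : Nonempty ι := ⟨i⟩
  le_antisymm (ciInf_le ⟨f i, forall_mem_range.2 h⟩ i) (le_ciInf h)

theorem DifferentiableAt.hasDerivAt_of_eventuallyLE_of_eq {m g : ℝ → ℝ} {t g' : ℝ}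
    (hm : DifferentiableAt ℝ m t) (hg : HasDerivAt g g' t) (hle : m ≤ᶠ[𝓝 t] g)
    (heq : m t = g t) : HasDerivAt m g' t := by
  have hgap_min : IsLocalMin (g - m) t :=
    hle.mono fun s hs => by simp only [Pi.sub_apply, heq, sub_self]; linarith
  have := hgap_min.hasDerivAt_eq_zero (hg.sub hm.hasDerivAt)
  rw [sub_eq_zero.1 this]
  exact hm.hasDerivAt

section InfimumOfFamily

variable {ι : Type*} {f : ℝ → ι → ℝ} {ξ : ℝ → ι} {s : Set ℝ}

theorem LipschitzOnWith.ciInf_of_forall_le {K : NNReal}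
    (hf : ∀ x, LipschitzOnWith K (fun t => f t x) s) (hξ : ∀ t ∈ s, ∀ x, f t (ξ t) ≤ f t x) :
    LipschitzOnWith K (fun t => ⨅ x, f t x) s := by
  refine LipschitzOnWith.of_le_add_mul K fun t ht t' ht' => ?_
  rw [ciInf_eq_of_forall_le (hξ t' ht')]
  exact (ciInf_le ⟨f t (ξ t), forall_mem_range.2 (hξ t ht)⟩ (ξ t')).trans
    ((hf (ξ t')).le_add_mul ht ht')

theorem ae_hasDerivAt_ciInf_of_lipschitzOnWith {K : NNReal} {f' : ℝ → ℝ} (hs : IsOpen s)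
    (hlip : LipschitzOnWith K (fun t => ⨅ x, f t x) s) (hξ : ∀ t ∈ s, ∀ x, f t (ξ t) ≤ f t x)
    (hf' : ∀ t ∈ s, HasDerivAt (fun τ => f τ (ξ t)) (f' t) t) :
    ∀ᵐ t ∂volume.restrict s, HasDerivAt (fun τ => ⨅ x, f τ x) (f' t) t := by
  rw [ae_restrict_iff' hs.measurableSet]
  filter_upwards [hlip.ae_differentiableWithinAt_of_mem_real] with t hdiff ht
  refine ((hdiff ht).differentiableAt (hs.mem_nhds ht)).hasDerivAt_of_eventuallyLE_of_eq
    (hf' t ht) ?_ (ciInf_eq_of_forall_le (hξ t ht))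
  filter_upwards [hs.mem_nhds ht] with τ hτ
  exact ciInf_le ⟨_, forall_mem_range.2 (hξ τ hτ)⟩ (ξ t)

end InfimumOfFamily

theorem stmt18_general (T : ℝ) (u utx : ℝ → ℝ → ℝ)
    (hreg : ∀ t ∈ Set.Icc (0:ℝ) T, ContDiff ℝ 2 (u t))
    (hL2 : ∀ t ∈ Set.Icc (0:ℝ) T,
      MemLp (u t) 2 volume ∧ MemLp (deriv (u t)) 2 volume ∧
        MemLp (deriv (deriv (u t))) 2 volume)
    (hd : ∀ x : ℝ, ∀ t ∈ Set.Icc (0:ℝ) T, HasDerivAt (fun s => deriv (u s) x) (utx t x) t)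
    (hB : ∃ B, ∀ t ∈ Set.Icc (0:ℝ) T, ∀ x, |utx t x| ≤ B) :
    ∃ ξ : ℝ → ℝ,
      (∀ t ∈ Set.Ico (0:ℝ) T, deriv (u t) (ξ t) = ⨅ x : ℝ, deriv (u t) x) ∧
      ContinuousOn (fun t => ⨅ x : ℝ, deriv (u t) x) (Set.Ico 0 T) ∧
      ∀ᵐ t ∂(volume.restrict (Set.Ioo 0 T)),
        HasDerivAt (fun s => ⨅ x : ℝ, deriv (u s) x) (utx t (ξ t)) t := by
  obtain ⟨B, hB⟩ := hB
  have hmin : ∀ t, ∃ y, t ∈ Icc 0 T → ∀ x, deriv (u t) y ≤ deriv (u t) x := fun t => by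
    by_cases ht : t ∈ Icc 0 T
    · obtain ⟨hu, hu', hu''⟩ := hL2 t ht
      obtain ⟨y, hy⟩ := exists_forall_deriv_le_of_memLp_two (hreg t ht) hu hu' hu''
      exact ⟨y, fun _ => hy⟩
    · exact ⟨0, fun h => absurd h ht⟩
  choose ξ hξ using hmin
  have hlip : LipschitzOnWith B.toNNReal (fun t => ⨅ x, deriv (u t) x) (Icc 0 T) :=
    LipschitzOnWith.ciInf_of_forall_le (fun x =>
      (convex_Icc 0 T).lipschitzOnWith_of_nnnorm_hasDerivWithin_le
        (fun t ht => (hd x t ht).hasDerivWithinAt)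
        fun t ht => NNReal.le_toNNReal_of_coe_le (hB t ht x)) hξ
  refine ⟨ξ, fun t ht => (ciInf_eq_of_forall_le (hξ t (Ico_subset_Icc_self ht))).symm,
    hlip.continuousOn.mono Ico_subset_Icc_self, ?_⟩
  exact ae_hasDerivAt_ciInf_of_lipschitzOnWith isOpen_Ioo (hlip.mono Ioo_subset_Icc_self)
    (fun t ht => hξ t (Ioo_subset_Icc_self ht)) fun t ht => hd _ t (Ioo_subset_Icc_self ht)

theorem stmt18 (T : ℝ) (hT : 0 < T) (u utx : ℝ → ℝ → ℝ)
    (hreg : ∀ t ∈ Set.Icc (0:ℝ) T, ContDiff ℝ 2 (u t))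
    (hL2 : ∀ t ∈ Set.Icc (0:ℝ) T,
      MemLp (u t) 2 volume ∧ MemLp (deriv (u t)) 2 volume ∧
        MemLp (deriv (deriv (u t))) 2 volume)
    (hutx_cont : Continuous (fun p : ℝ × ℝ => utx p.1 p.2))
    (hd : ∀ x : ℝ, ∀ t ∈ Set.Icc (0:ℝ) T, HasDerivAt (fun s => deriv (u s) x) (utx t x) t)
    (hB : ∃ B, ∀ t ∈ Set.Icc (0:ℝ) T, ∀ x, |utx t x| ≤ B) :
    ∃ ξ : ℝ → ℝ,
      (∀ t ∈ Set.Ico (0:ℝ) T, deriv (u t) (ξ t) = ⨅ x : ℝ, deriv (u t) x) ∧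
      ContinuousOn (fun t => ⨅ x : ℝ, deriv (u t) x) (Set.Ico 0 T) ∧
      ∀ᵐ t ∂(volume.restrict (Set.Ioo 0 T)),
        HasDerivAt (fun s => ⨅ x : ℝ, deriv (u s) x) (utx t (ξ t)) t :=
  stmt18_general T u utx hreg hL2 hd hB
end
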